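/- (Lemma 1.) Let F be the 2×2 matrix [[1,0],[1,1]] over GF(2), let G = F^{⊗m} be its m-th Kronecker power, let n = 2^m, let R : Fin n → ℝ be an LLR vector, and let A^c ⊆ Fin n be a frozen set. Define the likelihood of a source word u : Fin n → GF(2) as L(u) = ∑_{i} (1 − 2·⟦(u·G) i⟧) · R i, where ⟦b⟧ ∈ {0,1} ⊂ ℝ maps b ∈ GF(2) to the corresponding real number. Let x̂ be the hard-decision vector of R (x̂ i = 1 if R i < 0, else 0) and set û = x̂ · G. If û satisfies the frozen-set criteria, i.e. û k = 0 for all k ∈ A^c, then û is the maximum-likelihood decoding result among valid source words: û k = 0 for all k ∈ A^c, and for every u : Fin n → GF(2) with u k = 0 for all k ∈ A^c, one has L(u) ≤ L(û). -/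
import Mathlib


open Matrix Kronecker

/-- The polar-code kernel matrix `F = [[1,0],[1,1]]` over GF(2). -/
def polarF : Matrix (Fin 2) (Fin 2) (ZMod 2) := !![1, 0; 1, 1]

/-- The `m`-th Kronecker power of the polar kernel: `F^{⊗0} = 1` and
`F^{⊗(m+1)} = F ⊗ F^{⊗m}`, reindexed to be a `2^(m+1) × 2^(m+1)` matrix. -/
def kronPow : (m : ℕ) → Matrix (Fin (2 ^ m)) (Fin (2 ^ m)) (ZMod 2)
  | 0 => 1
  | m + 1 =>
    Matrix.reindex (finProdFinEquiv.trans (finCongr (by ring)))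
      (finProdFinEquiv.trans (finCongr (by ring))) (polarF ⊗ₖ kronPow m)


/-- Interpret an element of GF(2) as the real number 0 or 1. -/
def b2r (b : ZMod 2) : ℝ := (b.val : ℝ)

lemma polarF_sq : polarF * polarF = 1 := by
  decide

lemma kronPow_sq (m : ℕ) : kronPow m * kronPow m = 1 := by
  induction m with
  | zero => simp [kronPow]
  | succ m ih =>
    simp only [kronPow, Matrix.reindex_apply]
    rw [Matrix.submatrix_mul_equiv, ← Matrix.mul_kronecker_mul, polarF_sq, ih,
      Matrix.one_kronecker_one, Matrix.submatrix_one_equiv]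

lemma term_bound (b c : ZMod 2) (r : ℝ) (h : c = if r < 0 then 1 else 0) :
    (1 - 2 * b2r b) * r ≤ (1 - 2 * b2r c) * r := by
  have hb : b = 0 ∨ b = 1 := by revert b; decide
  rcases lt_or_ge r 0 with hr | hr
  · simp only [h, if_pos hr]
    rcases hb with hb | hb <;> subst hb <;>
      simp only [b2r, ZMod.val_zero, ZMod.val_one, Nat.cast_zero, Nat.cast_one] <;> nlinarith
  · simp only [h, if_neg (not_lt.mpr hr)]
    rcases hb with hb | hb <;> subst hb <;>
      simp only [b2r, ZMod.val_zero, ZMod.val_one, Nat.cast_zero, Nat.cast_one] <;> nlinarith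

/-- Lemma 1: if the hard-decision source word `û = x̂ · G` satisfies the
frozen-set criteria, then it is the maximum-likelihood decoding result among valid
source words. -/
theorem hardDecision_is_MLD (m : ℕ) (R : Fin (2 ^ m) → ℝ) (Ac : Set (Fin (2 ^ m)))
    (xhat : Fin (2 ^ m) → ZMod 2) (hxhat : ∀ i, xhat i = if R i < 0 then 1 else 0)
    (uhat : Fin (2 ^ m) → ZMod 2) (huhat : uhat = xhat ᵥ* kronPow m)
    (hfrozen : ∀ k ∈ Ac, uhat k = 0) :
    (∀ k ∈ Ac, uhat k = 0) ∧
      ∀ u : Fin (2 ^ m) → ZMod 2, (∀ k ∈ Ac, u k = 0) →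
        ∑ i, (1 - 2 * b2r ((u ᵥ* kronPow m) i)) * R i ≤
          ∑ i, (1 - 2 * b2r ((uhat ᵥ* kronPow m) i)) * R i := by
  have hinv : uhat ᵥ* kronPow m = xhat := by
    rw [huhat, Matrix.vecMul_vecMul, kronPow_sq, Matrix.vecMul_one]
  refine ⟨hfrozen, fun u _ => ?_⟩
  rw [hinv]
  exact Finset.sum_le_sum fun i _ => term_bound _ _ _ (hxhat i)
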